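/- arXiv:2101.06808 — 2 statements merged into one kernel-verified Lean document; each statement's English description precedes it below -/
import Mathlib

section
/- Under the hypotheses of the summability lemma (f bounded below, ρ a forcing function satisfying ρ(β·σ) ≤ β̄·ρ(σ) and ρ(γ·σ) ≤ γ̄·ρ(σ) with β̄ < 1 < γ̄, and iterates following the sufficient-decrease/step-size update rule), the sequence of step sizes converges to zero: lim_{k→∞} σ_k = 0. -/
open Filter

/-! The merit function `Φ k = γb * (f (x k) - flow) + ρ (σ k)` is nonnegative and drops by at
least `min 1 (1 - βb) * ρ (σ k)` at every iteration: on a success the descent `γb * ρ (σ k)` of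
the first term pays for the growth `ρ (σ (k + 1)) ≤ γb * ρ (σ k)`, and on a failure the second
term shrinks by the factor `βb`. Hence `∑ ρ (σ k) < ∞`, so `ρ (σ k) → 0`, and `σ k → 0` because
`ρ` is monotone and positive on positive reals. -/

theorem Monotone.tendsto_zero_of_tendsto_comp {ι : Type*} {l : Filter ι} {ρ : ℝ → ℝ} {u : ι → ℝ}
    (hρ : Monotone ρ) (hρpos : ∀ s, 0 < s → 0 < ρ s) (hu : ∀ i, 0 ≤ u i)
    (h : Tendsto (fun i => ρ (u i)) l (nhds 0)) : Tendsto u l (nhds 0) := by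
  refine tendsto_order.2 ⟨fun a ha => Eventually.of_forall fun i => ha.trans_le (hu i),
    fun ε hε => ?_⟩
  filter_upwards [(tendsto_order.1 h).2 _ (hρpos ε hε)] with i hi
  exact hρ.reflect_lt hi

theorem summable_of_mul_le_sub_succ {a Φ : ℕ → ℝ} {δ : ℝ} (hδ : 0 < δ) (ha : ∀ k, 0 ≤ a k)
    (hΦ : ∀ k, 0 ≤ Φ k) (h : ∀ k, δ * a k ≤ Φ k - Φ (k + 1)) : Summable a := by
  refine summable_of_sum_range_le ha (c := Φ 0 / δ) fun N => ?_
  have htelescope : δ * ∑ k ∈ Finset.range N, a k ≤ Φ 0 - Φ N := by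
    rw [Finset.mul_sum, ← Finset.sum_range_sub']
    exact Finset.sum_le_sum fun k _ => h k
  rw [le_div_iff₀ hδ]
  linarith [hΦ N]

theorem min_mul_le_sub_of_step {F F' r r' βb γb : ℝ} (hγb : 0 ≤ γb) (hr : 0 ≤ r)
    (h : (F' ≤ F - r ∧ r' ≤ γb * r) ∨ (F' = F ∧ r' ≤ βb * r)) :
    min 1 (1 - βb) * r ≤ (γb * F + r) - (γb * F' + r') := by
  rcases h with ⟨hF, hr'⟩ | ⟨rfl, hr'⟩
  · linarith [mul_le_mul_of_nonneg_left hF hγb,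
      mul_le_mul_of_nonneg_right (min_le_left 1 (1 - βb)) hr]
  · linarith [mul_le_mul_of_nonneg_right (min_le_right 1 (1 - βb)) hr]

theorem summable_forcing_of_step {E : Type*} {f : E → ℝ} {flow : ℝ} (hbd : ∀ x, flow ≤ f x)
    {x : ℕ → E} {σ : ℕ → ℝ} (hσ : ∀ k, 0 < σ k) {ρ : ℝ → ℝ} (hρpos : ∀ s, 0 < s → 0 < ρ s)
    {β γ βb γb : ℝ} (hβb : βb < 1) (hγb : 0 ≤ γb)
    (hρβ : ∀ s, 0 < s → ρ (β * s) ≤ βb * ρ s) (hργ : ∀ s, 0 < s → ρ (γ * s) ≤ γb * ρ s)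
    (hstep : ∀ k,
      (f (x (k + 1)) ≤ f (x k) - ρ (σ k) ∧ σ (k + 1) = γ * σ k) ∨
      (x (k + 1) = x k ∧ σ (k + 1) = β * σ k)) :
    Summable fun k => ρ (σ k) := by
  have hρσ : ∀ k, 0 ≤ ρ (σ k) := fun k => (hρpos _ (hσ k)).le
  refine summable_of_mul_le_sub_succ (Φ := fun k => γb * (f (x k) - flow) + ρ (σ k))
    (lt_min one_pos (sub_pos.2 hβb)) hρσ
    (fun k => add_nonneg (mul_nonneg hγb (sub_nonneg.2 (hbd _))) (hρσ k)) fun k => ?_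
  refine min_mul_le_sub_of_step hγb (hρσ k) ?_
  rcases hstep k with ⟨hf, hs⟩ | ⟨hx, hs⟩
  · exact .inl ⟨by linarith, hs ▸ hργ _ (hσ k)⟩
  · exact .inr ⟨by rw [hx], hs ▸ hρβ _ (hσ k)⟩

theorem stmt2_general (n : ℕ) (f : (Fin n → ℝ) → ℝ) (flow : ℝ)
    (hbd : ∀ x, flow ≤ f x)
    (x : ℕ → (Fin n → ℝ)) (σ : ℕ → ℝ) (hσ : ∀ k, 0 < σ k)
    (ρ : ℝ → ℝ) (hρmono : Monotone ρ)
    (hρpos : ∀ s, 0 < s → 0 < ρ s)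
    (β γ : ℝ)
    (βb γb : ℝ) (hβb : βb < 1) (hγb : 1 < γb)
    (hρβ : ∀ s, 0 < s → ρ (β * s) ≤ βb * ρ s)
    (hργ : ∀ s, 0 < s → ρ (γ * s) ≤ γb * ρ s)
    (hstep : ∀ k,
      (f (x (k + 1)) ≤ f (x k) - ρ (σ k) ∧ σ (k + 1) = γ * σ k) ∨
      (x (k + 1) = x k ∧ σ (k + 1) = β * σ k)) :
    Tendsto σ atTop (nhds 0) := by
  have hsum : Summable fun k => ρ (σ k) :=
    summable_forcing_of_step hbd hσ hρpos hβb (by linarith) hρβ hργ hstep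
  exact hρmono.tendsto_zero_of_tendsto_comp hρpos (fun k => (hσ k).le)
    hsum.tendsto_atTop_zero

theorem stmt2 (n : ℕ) (f : (Fin n → ℝ) → ℝ) (flow : ℝ)
    (hbd : ∀ x, flow ≤ f x)
    (x : ℕ → (Fin n → ℝ)) (σ : ℕ → ℝ) (hσ : ∀ k, 0 < σ k)
    (ρ : ℝ → ℝ) (hρcont : Continuous ρ) (hρmono : Monotone ρ)
    (hρpos : ∀ s, 0 < s → 0 < ρ s) (hρ0 : ρ 0 = 0)
    (β γ : ℝ) (hβ0 : 0 < β) (hβ1 : β < 1) (hγ : 1 < γ)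
    (βb γb : ℝ) (hβb : βb < 1) (hγb : 1 < γb)
    (hρβ : ∀ s, 0 < s → ρ (β * s) ≤ βb * ρ s)
    (hργ : ∀ s, 0 < s → ρ (γ * s) ≤ γb * ρ s)
    (hstep : ∀ k,
      (f (x (k + 1)) ≤ f (x k) - ρ (σ k) ∧ σ (k + 1) = γ * σ k) ∨
      (x (k + 1) = x k ∧ σ (k + 1) = β * σ k)) :
    Tendsto σ atTop (nhds 0) :=
  stmt2_general n f flow hbd x σ hσ ρ hρmono hρpos β γ βb γb hβb hγb hρβ hργ hstep
end

section
/- Let f : ℝⁿ → ℝ be bounded below, and let (x_k), (d_k), (σ_k) be sequences with σ_k > 0, ‖d_k‖ bounded, and satisfying: whenever f(x_k) − f(x_k + σ_k·d_k) ≥ ρ(σ_k), we have σ_{k+1} = γ·σ_k (γ > 1), otherwise σ_{k+1} = β·σ_k (β ∈ (0,1)); assume furthermore σ_k → 0 and ρ is a forcing function (ρ(σ)/σ → 0 as σ ↓ 0). Then liminf_{k→∞} (f(x_k) − f(x_k + σ_k·d_k))/σ_k ≤ 0. -/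
open Filter

theorem stmt4 (n : ℕ) (f : (Fin n → ℝ) → ℝ) (flow : ℝ)
    (hbd : ∀ y, flow ≤ f y)
    (x d : ℕ → (Fin n → ℝ)) (σ : ℕ → ℝ) (hσ : ∀ k, 0 < σ k)
    (M : ℝ) (hM : ∀ k, ‖d k‖ ≤ M)
    (ρ : ℝ → ℝ)
    (hforcing : Tendsto (fun s => ρ s / s) (nhdsWithin 0 (Set.Ioi 0)) (nhds 0))
    (β γ : ℝ) (hβ : β ∈ Set.Ioo (0 : ℝ) 1) (hγ : 1 < γ)
    (hstep : ∀ k,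
      (ρ (σ k) ≤ f (x k) - f (x k + σ k • d k) → σ (k + 1) = γ * σ k) ∧
      (¬ ρ (σ k) ≤ f (x k) - f (x k + σ k • d k) → σ (k + 1) = β * σ k))
    (hσ0 : Tendsto σ atTop (nhds 0)) :
    Filter.liminf (fun k => (f (x k) - f (x k + σ k • d k)) / σ k) atTop ≤ 0 := by
  set u : ℕ → ℝ := fun k => (f (x k) - f (x k + σ k • d k)) / σ k with hu
  -- ρ(σ k)/σ k → 0
  have hσ0' : Tendsto σ atTop (nhdsWithin 0 (Set.Ioi 0)) :=
    tendsto_nhdsWithin_of_tendsto_nhds_of_eventually_within σ hσ0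
      (Eventually.of_forall fun k => hσ k)
  have hratio : Tendsto (fun k => ρ (σ k) / σ k) atTop (nhds 0) := hforcing.comp hσ0'
  -- infinitely many unsuccessful iterations
  have hfreq : ∃ᶠ k in atTop, ¬ ρ (σ k) ≤ f (x k) - f (x k + σ k • d k) := by
    by_contra h
    rw [not_frequently] at h
    simp only [not_not] at h
    obtain ⟨N, hN⟩ := eventually_atTop.mp h
    have hmono : ∀ m : ℕ, σ N ≤ σ (N + m) := by
      intro m
      induction m with
      | zero => simp
      | succ m ih =>
        have hs := (hstep (N + m)).1 (hN _ (Nat.le_add_right _ _))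
        have : σ (N + m) ≤ γ * σ (N + m) :=
          le_mul_of_one_le_left (hσ _).le hγ.le
        calc σ N ≤ σ (N + m) := ih
          _ ≤ γ * σ (N + m) := this
          _ = σ (N + m + 1) := hs.symm
    have hev : ∀ᶠ k in atTop, σ k < σ N :=
      hσ0.eventually_lt_const (hσ N)
    obtain ⟨K, hK⟩ := eventually_atTop.mp hev
    have hKN := hK (max K N) (le_max_left _ _)
    have : σ N ≤ σ (max K N) := by
      have := hmono (max K N - N)
      rwa [Nat.add_sub_cancel' (le_max_right K N)] at this
    linarith
  -- for every ε > 0, frequently u k < ε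
  have key : ∀ ε : ℝ, 0 < ε → ∃ᶠ k in atTop, u k < ε := by
    intro ε hε
    have hev : ∀ᶠ k in atTop, ρ (σ k) / σ k < ε :=
      hratio.eventually_lt_const hε
    refine (hfreq.and_eventually hev).mono ?_
    rintro k ⟨hk1, hk2⟩
    have hσk := hσ k
    have h1 : f (x k) - f (x k + σ k • d k) < ρ (σ k) := not_le.mp hk1
    have h2 : ρ (σ k) < ε * σ k := (div_lt_iff₀ hσk).mp hk2
    rw [hu]
    exact (div_lt_iff₀ hσk).mpr (by linarith)
  -- conclude via sSup characterization of liminf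
  rw [liminf_eq]
  apply Real.sSup_le
  · intro a ha
    simp only [Set.mem_setOf_eq] at ha
    by_contra hpos
    push_neg at hpos
    obtain ⟨k, hk1, hk2⟩ := ((key a hpos).and_eventually ha).exists
    exact absurd hk2 (not_le.mpr hk1)
  · exact le_refl 0
end
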